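/- arXiv:2403.05439 — 2 statements merged into one kernel-verified Lean document; each statement's English description precedes it below -/
import Mathlib

section
/- Let G be a finite simple graph, let vw be an edge of G, let G' be the graph obtained from G by removing the edge vw (keeping all vertices), and let σ be a Scarf face of I(G'). Then σ ∪ {vw} is a Scarf face of I(G) if and only if dist_G(e, vw) ≠ 1 for all e ∈ σ and one of the following holds: (1) dist_G(σ, vw) ≥ 2; or (2) dist_G(σ, vw) = 0 and (a) N_σ(w) = ∅ or N_σ(v) = ∅, and (b) N_σ(w) ∩ N_G(v) = N_σ(v) ∩ N_G(w) = ∅. -/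
/-- The monomial (exponent vector) of an edge: `1` on its endpoints, `0` elsewhere. -/
def edgeMon {V : Type*} [DecidableEq V] (e : Sym2 V) : V → ℕ :=
  fun x => if x ∈ e then 1 else 0

/-- The lcm (componentwise max) of the monomials of a finite set of edges. -/
def eLcm {V : Type*} [DecidableEq V] (σ : Finset (Sym2 V)) : V → ℕ :=
  σ.sup edgeMon

/-- `σ` is a Scarf face of the edge ideal `I(G)`, identified with a set of edges of `G`:
its lcm is distinct from the lcm of any other set of edges of `G`. -/
def IsScarf {V : Type*} [DecidableEq V] (G : SimpleGraph V) (σ : Finset (Sym2 V)) : Prop :=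
  (∀ e ∈ σ, e ∈ G.edgeSet) ∧
    ∀ τ : Finset (Sym2 V), (∀ e ∈ τ, e ∈ G.edgeSet) → eLcm τ = eLcm σ → τ = σ

/-- `dist_G(e, f) = 0`: the two edges share a vertex. -/
def Dist0 {V : Type*} (e f : Sym2 V) : Prop := ∃ x, x ∈ e ∧ x ∈ f

/-- `dist_G(e, f) = 1`: the edges are vertex-disjoint, but some endpoint of `e` is
adjacent in `G` to some endpoint of `f`. -/
def Dist1 {V : Type*} (G : SimpleGraph V) (e f : Sym2 V) : Prop :=
  ¬ Dist0 e f ∧ ∃ x ∈ e, ∃ y ∈ f, G.Adj x y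

lemma eLcm_pos_iff {V : Type*} [DecidableEq V] (σ : Finset (Sym2 V)) (z : V) :
    0 < eLcm σ z ↔ ∃ e ∈ σ, z ∈ e := by
  unfold eLcm
  rw [Finset.sup_apply, Finset.lt_sup_iff]
  unfold edgeMon
  refine exists_congr fun e => and_congr_right fun _ => ?_
  split <;> simp_all

lemma eLcm_le_one {V : Type*} [DecidableEq V] (σ : Finset (Sym2 V)) (z : V) :
    eLcm σ z ≤ 1 := by
  unfold eLcm
  rw [Finset.sup_apply]
  exact Finset.sup_le (fun e _ => by unfold edgeMon; split <;> omega)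

lemma eLcm_eq_iff {V : Type*} [DecidableEq V] (σ τ : Finset (Sym2 V)) :
    eLcm σ = eLcm τ ↔ ∀ z, (∃ e ∈ σ, z ∈ e) ↔ (∃ e ∈ τ, z ∈ e) := by
  constructor
  · intro h z
    rw [← eLcm_pos_iff, ← eLcm_pos_iff, h]
  · intro h
    funext z
    have h1 := eLcm_le_one σ z
    have h2 := eLcm_le_one τ z
    have := (eLcm_pos_iff σ z).trans ((h z).trans (eLcm_pos_iff τ z).symm)
    omega

/-- If `ρ` is Scarf for `G`, `x~y` in `G`, and each of `x`, `y` is covered by an edge of `ρ`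
other than `s(x,y)`, we get a contradiction. -/
lemma scarf_no_swap {V : Type*} [DecidableEq V] {G : SimpleGraph V} {ρ : Finset (Sym2 V)}
    (h : IsScarf G ρ) {x y : V} (hxy : G.Adj x y)
    {e : Sym2 V} (he : e ∈ ρ) (hxe : x ∈ e) (hene : e ≠ s(x, y))
    {e' : Sym2 V} (he' : e' ∈ ρ) (hye' : y ∈ e') (hene' : e' ≠ s(x, y)) : False := by
  by_cases hg : s(x, y) ∈ ρ
  · have key : ρ.erase s(x, y) = ρ := by
      apply h.2
      · exact fun g hg' => h.1 g (Finset.mem_of_mem_erase hg')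
      · rw [eLcm_eq_iff]
        intro z
        constructor
        · rintro ⟨g, hgm, hzg⟩
          exact ⟨g, Finset.mem_of_mem_erase hgm, hzg⟩
        · rintro ⟨g, hgm, hzg⟩
          by_cases hgeq : g = s(x, y)
          · subst hgeq
            rcases Sym2.mem_iff.mp hzg with rfl | rfl
            · exact ⟨e, Finset.mem_erase.mpr ⟨hene, he⟩, hxe⟩
            · exact ⟨e', Finset.mem_erase.mpr ⟨hene', he'⟩, hye'⟩
          · exact ⟨g, Finset.mem_erase.mpr ⟨hgeq, hgm⟩, hzg⟩
    exact (Finset.notMem_erase _ _ (key ▸ hg))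
  · have key : insert s(x, y) ρ = ρ := by
      apply h.2
      · intro g hg'
        rcases Finset.mem_insert.mp hg' with rfl | hg'
        · exact G.mem_edgeSet.mpr hxy
        · exact h.1 g hg'
      · rw [eLcm_eq_iff]
        intro z
        constructor
        · rintro ⟨g, hgm, hzg⟩
          rcases Finset.mem_insert.mp hgm with rfl | hgm
          · rcases Sym2.mem_iff.mp hzg with rfl | rfl
            · exact ⟨e, he, hxe⟩
            · exact ⟨e', he', hye'⟩
          · exact ⟨g, hgm, hzg⟩
        · rintro ⟨g, hgm, hzg⟩
          exact ⟨g, Finset.mem_insert_of_mem hgm, hzg⟩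
    exact hg (key ▸ Finset.mem_insert_self _ _)

lemma exists_adj_of_mem {V : Type*} {G : SimpleGraph V} {e : Sym2 V} (he : e ∈ G.edgeSet)
    {x : V} (hx : x ∈ e) : ∃ y, e = s(x, y) ∧ G.Adj x y := by
  obtain ⟨y, rfl⟩ := Sym2.mem_iff_exists.mp hx
  exact ⟨y, rfl, G.mem_edgeSet.mp he⟩

lemma scarf_case1 {V : Type*} [DecidableEq V] (G : SimpleGraph V) (v w : V)
    (hvw : G.Adj v w) (σ : Finset (Sym2 V))
    (hσ : IsScarf (G.deleteEdges {s(v, w)}) σ)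
    (H : ∀ e ∈ σ, ¬ Dist0 e s(v, w) ∧ ¬ Dist1 G e s(v, w)) :
    IsScarf G (insert s(v, w) σ) := by
  have hσE : ∀ e ∈ σ, e ∈ G.edgeSet ∧ e ≠ s(v, w) := by
    intro e he
    have := hσ.1 e he
    rw [SimpleGraph.edgeSet_deleteEdges] at this
    exact ⟨this.1, this.2⟩
  have hvnσ : ∀ e ∈ σ, v ∉ e ∧ w ∉ e := by
    intro e he
    constructor
    · intro hv; exact (H e he).1 ⟨v, hv, Sym2.mem_iff.mpr (Or.inl rfl)⟩
    · intro hw; exact (H e he).1 ⟨w, hw, Sym2.mem_iff.mpr (Or.inr rfl)⟩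
  constructor
  · intro e he
    rcases Finset.mem_insert.mp he with rfl | he
    · exact G.mem_edgeSet.mpr hvw
    · exact (hσE e he).1
  · intro τ hτE hτeq
    rw [eLcm_eq_iff] at hτeq
    -- every edge of τ touching {v, w} is s(v, w)
    have C1 : ∀ e ∈ τ, (v ∈ e ∨ w ∈ e) → e = s(v, w) := by
      intro e he hmem
      -- uniform: let u ∈ {v,w} with u ∈ e; other endpoint y is covered by insert f σ
      have key : ∀ u u' : V, s(u, u') = s(v, w) → u ∈ e → e = s(v, w) := by
        intro u u' huu' hue
        obtain ⟨y, rfl, hadj⟩ := exists_adj_of_mem (hτE e he) hue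
        have hy : ∃ e' ∈ insert s(v, w) σ, y ∈ e' :=
          (hτeq y).mp ⟨_, he, Sym2.mem_iff.mpr (Or.inr rfl)⟩
        obtain ⟨e', he', hye'⟩ := hy
        rcases Finset.mem_insert.mp he' with rfl | he'
        · -- y = v or y = w; also u ∈ {v,w}; conclude s(u,y) = s(v,w) or contradiction
          have hu : u ∈ s(v, w) := huu' ▸ Sym2.mem_iff.mpr (Or.inl rfl)
          rcases Sym2.mem_iff.mp hye' with rfl | rfl <;>
            rcases Sym2.mem_iff.mp hu with rfl | rfl
          · exact absurd hadj (G.irrefl)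
          · rw [Sym2.eq_swap]
          · rfl
          · exact absurd hadj (G.irrefl)
        · -- y covered by an edge of σ : contradiction with ¬Dist1
          have hu : u ∈ s(v, w) := huu' ▸ Sym2.mem_iff.mpr (Or.inl rfl)
          exact absurd ⟨(H e' he').1, y, hye', u, hu, hadj.symm⟩ (H e' he').2
      rcases hmem with hv | hw
      · exact key v w rfl hv
      · exact key w v (Sym2.eq_swap) hw
    have hfτ : s(v, w) ∈ τ := by
      obtain ⟨g, hg, hvg⟩ := (hτeq v).mpr
        ⟨s(v, w), Finset.mem_insert_self _ _, Sym2.mem_iff.mpr (Or.inl rfl)⟩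
      exact C1 g hg (Or.inl hvg) ▸ hg
    have herase : τ.erase s(v, w) = σ := by
      apply hσ.2
      · intro g hg
        rw [SimpleGraph.edgeSet_deleteEdges]
        exact ⟨hτE g (Finset.mem_of_mem_erase hg), (Finset.mem_erase.mp hg).1⟩
      · rw [eLcm_eq_iff]
        intro z
        constructor
        · rintro ⟨g, hg, hzg⟩
          have hgτ := Finset.mem_of_mem_erase hg
          obtain ⟨e', he', hze'⟩ := (hτeq z).mp ⟨g, hgτ, hzg⟩
          rcases Finset.mem_insert.mp he' with rfl | he'
          · exfalso
            rcases Sym2.mem_iff.mp hze' with rfl | rfl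
            · exact (Finset.mem_erase.mp hg).1 (C1 g hgτ (Or.inl hzg))
            · exact (Finset.mem_erase.mp hg).1 (C1 g hgτ (Or.inr hzg))
          · exact ⟨e', he', hze'⟩
        · rintro ⟨e', he', hze'⟩
          obtain ⟨g, hg, hzg⟩ := (hτeq z).mpr ⟨e', Finset.mem_insert_of_mem he', hze'⟩
          refine ⟨g, Finset.mem_erase.mpr ⟨?_, hg⟩, hzg⟩
          rintro rfl
          rcases Sym2.mem_iff.mp hzg with rfl | rfl
          · exact (hvnσ e' he').1 hze'
          · exact (hvnσ e' he').2 hze'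
    rw [← herase, Finset.insert_erase hfτ]

/-- Case 2: `N_σ(v) = ∅`, `N_σ(w) ∩ N_G(v) = ∅`, and some edge of `σ` contains `w`. -/
lemma scarf_case2 {V : Type*} [DecidableEq V] (G : SimpleGraph V) (v w : V)
    (hvw : G.Adj v w) (σ : Finset (Sym2 V))
    (hσ : IsScarf (G.deleteEdges {s(v, w)}) σ)
    (H1 : ∀ e ∈ σ, ¬ Dist1 G e s(v, w))
    (hB : ∀ x, s(x, v) ∉ σ)
    (hA : ∀ x, s(x, w) ∈ σ → ¬ G.Adj v x)
    (a₀ : V) (ha₀ : s(a₀, w) ∈ σ) :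
    IsScarf G (insert s(v, w) σ) := by
  have hσE : ∀ e ∈ σ, e ∈ G.edgeSet ∧ e ≠ s(v, w) := by
    intro e he
    have := hσ.1 e he
    rw [SimpleGraph.edgeSet_deleteEdges] at this
    exact ⟨this.1, this.2⟩
  -- no edge of σ contains v
  have hvσ : ∀ e ∈ σ, v ∉ e := by
    intro e he hv
    obtain ⟨y, rfl, _⟩ := exists_adj_of_mem (hσE e he).1 hv
    exact hB y (Sym2.eq_swap ▸ he)
  have ha₀adj : G.Adj a₀ w := G.mem_edgeSet.mp (hσE _ ha₀).1
  have ha₀v : a₀ ≠ v := by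
    rintro rfl
    exact (hσE _ ha₀).2 rfl
  have hwcov : ∃ e ∈ σ, w ∈ e := ⟨_, ha₀, Sym2.mem_iff.mpr (Or.inr rfl)⟩
  -- an edge of σ containing a vertex adjacent (in G) to w must contain w
  have hNw : ∀ g ∈ σ, ∀ a ∈ g, G.Adj a w → w ∈ g := by
    intro g hg a hag hadj
    by_contra hwg
    exact H1 g hg ⟨fun ⟨x, hxg, hxf⟩ => by
        rcases Sym2.mem_iff.mp hxf with rfl | rfl
        · exact hvσ g hg hxg
        · exact hwg hxg,
      a, hag, w, Sym2.mem_iff.mpr (Or.inr rfl), hadj⟩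
  constructor
  · intro e he
    rcases Finset.mem_insert.mp he with rfl | he
    · exact G.mem_edgeSet.mpr hvw
    · exact (hσE e he).1
  · intro τ hτE hτeq
    rw [eLcm_eq_iff] at hτeq
    -- the only edge of τ containing v is s(v, w)
    have C1 : ∀ e ∈ τ, v ∈ e → e = s(v, w) := by
      intro e he hv
      obtain ⟨y, rfl, hadj⟩ := exists_adj_of_mem (hτE e he) hv
      obtain ⟨e', he', hye'⟩ := (hτeq y).mp ⟨_, he, Sym2.mem_iff.mpr (Or.inr rfl)⟩
      rcases Finset.mem_insert.mp he' with rfl | he'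
      · rcases Sym2.mem_iff.mp hye' with rfl | rfl
        · exact absurd hadj (G.irrefl)
        · rfl
      · by_cases hyw : y = w
        · exact hyw ▸ rfl
        · exfalso
          by_cases hwe' : w ∈ e'
          · obtain ⟨u, rfl, _⟩ := exists_adj_of_mem (hσE e' he').1 hwe'
            rcases Sym2.mem_iff.mp hye' with rfl | rfl
            · exact hyw rfl
            · exact hA y (Sym2.eq_swap ▸ he') hadj
          · exact H1 e' he' ⟨fun ⟨x, hxe, hxf⟩ => by
                rcases Sym2.mem_iff.mp hxf with h | h
                · exact hvσ e' he' (h ▸ hxe)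
                · exact hwe' (h ▸ hxe),
              y, hye', v, Sym2.mem_iff.mpr (Or.inl rfl), hadj.symm⟩
    have hfτ : s(v, w) ∈ τ := by
      obtain ⟨g, hg, hvg⟩ := (hτeq v).mpr
        ⟨s(v, w), Finset.mem_insert_self _ _, Sym2.mem_iff.mpr (Or.inl rfl)⟩
      exact C1 g hg hvg ▸ hg
    -- some edge of τ other than s(v,w) contains w
    have Cw : ∃ g ∈ τ, g ≠ s(v, w) ∧ w ∈ g := by
      by_contra hno
      push_neg at hno
      -- edges of τ.erase s(v,w) avoid both v and w
      have hτ'v : ∀ g ∈ τ.erase s(v, w), v ∉ g ∧ w ∉ g := by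
        intro g hg
        obtain ⟨hne, hgτ⟩ := Finset.mem_erase.mp hg
        exact ⟨fun hv => hne (C1 g hgτ hv), hno g hgτ hne⟩
      have key : insert s(a₀, w) (τ.erase s(v, w)) = σ := by
        apply hσ.2
        · intro g hg
          rcases Finset.mem_insert.mp hg with rfl | hg
          · exact hσ.1 _ ha₀
          · rw [SimpleGraph.edgeSet_deleteEdges]
            exact ⟨hτE g (Finset.mem_of_mem_erase hg), (Finset.mem_erase.mp hg).1⟩
        · rw [eLcm_eq_iff]
          intro z
          constructor
          · rintro ⟨g, hg, hzg⟩
            rcases Finset.mem_insert.mp hg with rfl | hg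
            · rcases Sym2.mem_iff.mp hzg with rfl | rfl
              · exact ⟨_, ha₀, Sym2.mem_iff.mpr (Or.inl rfl)⟩
              · exact hwcov
            · obtain ⟨e', he', hze'⟩ := (hτeq z).mp ⟨g, Finset.mem_of_mem_erase hg, hzg⟩
              rcases Finset.mem_insert.mp he' with rfl | he'
              · exfalso
                rcases Sym2.mem_iff.mp hze' with rfl | rfl
                · exact (hτ'v g hg).1 hzg
                · exact (hτ'v g hg).2 hzg
              · exact ⟨e', he', hze'⟩
          · rintro ⟨e', he', hze'⟩
            obtain ⟨g, hg, hzg⟩ := (hτeq z).mpr ⟨e', Finset.mem_insert_of_mem he', hze'⟩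
            by_cases hgf : g = s(v, w)
            · subst hgf
              rcases Sym2.mem_iff.mp hzg with h | h
              · exact absurd (h ▸ hze') (hvσ e' he')
              · exact ⟨s(a₀, w), Finset.mem_insert_self _ _,
                  h ▸ Sym2.mem_iff.mpr (Or.inr rfl)⟩
            · exact ⟨g, Finset.mem_insert_of_mem (Finset.mem_erase.mpr ⟨hgf, hg⟩), hzg⟩
      -- a₀ is covered by some edge of τ; that edge lands in σ and gives Dist1
      obtain ⟨g, hg, hag⟩ := (hτeq a₀).mpr
        ⟨s(a₀, w), Finset.mem_insert_of_mem ha₀, Sym2.mem_iff.mpr (Or.inl rfl)⟩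
      have hgf : g ≠ s(v, w) := by
        rintro rfl
        rcases Sym2.mem_iff.mp hag with h | h
        · exact ha₀v h
        · exact (G.ne_of_adj ha₀adj) h
      have hwg : w ∉ g := hno g hg hgf
      have hgσ : g ∈ σ := by
        have : g ∈ insert s(a₀, w) (τ.erase s(v, w)) :=
          Finset.mem_insert_of_mem (Finset.mem_erase.mpr ⟨hgf, hg⟩)
        rwa [key] at this
      exact hwg (hNw g hgσ a₀ hag ha₀adj)
    have herase : τ.erase s(v, w) = σ := by
      apply hσ.2
      · intro g hg
        rw [SimpleGraph.edgeSet_deleteEdges]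
        exact ⟨hτE g (Finset.mem_of_mem_erase hg), (Finset.mem_erase.mp hg).1⟩
      · rw [eLcm_eq_iff]
        intro z
        constructor
        · rintro ⟨g, hg, hzg⟩
          obtain ⟨hne, hgτ⟩ := Finset.mem_erase.mp hg
          obtain ⟨e', he', hze'⟩ := (hτeq z).mp ⟨g, hgτ, hzg⟩
          rcases Finset.mem_insert.mp he' with rfl | he'
          · rcases Sym2.mem_iff.mp hze' with rfl | rfl
            · exact absurd (C1 g hgτ hzg) hne
            · exact hwcov
          · exact ⟨e', he', hze'⟩
        · rintro ⟨e', he', hze'⟩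
          obtain ⟨g, hg, hzg⟩ := (hτeq z).mpr ⟨e', Finset.mem_insert_of_mem he', hze'⟩
          by_cases hgf : g = s(v, w)
          · subst hgf
            rcases Sym2.mem_iff.mp hzg with rfl | rfl
            · exact absurd hze' (hvσ e' he')
            · obtain ⟨g₁, hg₁, hg₁f, hwg₁⟩ := Cw
              exact ⟨g₁, Finset.mem_erase.mpr ⟨hg₁f, hg₁⟩, hwg₁⟩
          · exact ⟨g, Finset.mem_erase.mpr ⟨hgf, hg⟩, hzg⟩
    rw [← herase, Finset.insert_erase hfτ]

theorem stmt5 {V : Type*} [Fintype V] [DecidableEq V] (G : SimpleGraph V) (v w : V)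
    (hvw : G.Adj v w) (σ : Finset (Sym2 V))
    (hσ : IsScarf (G.deleteEdges {s(v, w)}) σ) :
    IsScarf G (insert s(v, w) σ) ↔
      ((∀ e ∈ σ, ¬ Dist1 G e s(v, w)) ∧
        ((∀ e ∈ σ, ¬ Dist0 e s(v, w) ∧ ¬ Dist1 G e s(v, w)) ∨
          ((∃ e ∈ σ, Dist0 e s(v, w)) ∧
            ({x : V | s(x, w) ∈ σ} = ∅ ∨ {x : V | s(x, v) ∈ σ} = ∅) ∧
            {x : V | s(x, w) ∈ σ} ∩ G.neighborSet v = ∅ ∧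
            {x : V | s(x, v) ∈ σ} ∩ G.neighborSet w = ∅))) := by
  have hσE : ∀ e ∈ σ, e ∈ G.edgeSet ∧ e ≠ s(v, w) := by
    intro e he
    have := hσ.1 e he
    rw [SimpleGraph.edgeSet_deleteEdges] at this
    exact ⟨this.1, this.2⟩
  constructor
  · intro h
    have H1 : ∀ e ∈ σ, ¬ Dist1 G e s(v, w) := by
      rintro e he ⟨hnd0, x, hxe, y, hyf, hxy⟩
      refine scarf_no_swap h hxy (Finset.mem_insert_of_mem he) hxe ?_
        (Finset.mem_insert_self _ _) hyf ?_
      · rintro rfl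
        exact hnd0 ⟨y, Sym2.mem_iff.mpr (Or.inr rfl), hyf⟩
      · intro hf
        exact hnd0 ⟨x, hxe, by rw [hf]; exact Sym2.mem_iff.mpr (Or.inl rfl)⟩
    refine ⟨H1, ?_⟩
    by_cases hD : ∀ e ∈ σ, ¬ Dist0 e s(v, w)
    · exact Or.inl fun e he => ⟨hD e he, H1 e he⟩
    · right
      push_neg at hD
      obtain ⟨e, he, hd0⟩ := hD
      refine ⟨⟨e, he, hd0⟩, ?_, ?_, ?_⟩
      · by_contra hcon
        push_neg at hcon
        obtain ⟨a, ha⟩ := hcon.1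
        obtain ⟨b, hb⟩ := hcon.2
        have ha' : s(a, w) ∈ σ := ha
        have hb' : s(b, v) ∈ σ := hb
        exact scarf_no_swap h hvw (Finset.mem_insert_of_mem hb')
          (Sym2.mem_iff.mpr (Or.inr rfl)) (hσE _ hb').2
          (Finset.mem_insert_of_mem ha') (Sym2.mem_iff.mpr (Or.inr rfl)) (hσE _ ha').2
      · apply Set.eq_empty_iff_forall_notMem.mpr
        rintro a ⟨haσ, hav⟩
        have haσ' : s(a, w) ∈ σ := haσ
        have hav' : G.Adj v a := hav
        have haw : G.Adj a w := G.mem_edgeSet.mp (hσE _ haσ').1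
        refine scarf_no_swap h hav' (Finset.mem_insert_self _ _)
          (Sym2.mem_iff.mpr (Or.inl rfl)) ?_
          (Finset.mem_insert_of_mem haσ') (Sym2.mem_iff.mpr (Or.inl rfl)) ?_
        · intro hf
          have : w ∈ s(v, a) := by rw [← hf]; exact Sym2.mem_iff.mpr (Or.inr rfl)
          rcases Sym2.mem_iff.mp this with h1 | h1
          · exact G.ne_of_adj hvw h1.symm
          · exact G.ne_of_adj haw h1.symm
        · intro hf
          have : v ∈ s(a, w) := by rw [hf]; exact Sym2.mem_iff.mpr (Or.inl rfl)
          rcases Sym2.mem_iff.mp this with h1 | h1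
          · exact G.ne_of_adj hav' h1
          · exact G.ne_of_adj hvw h1
      · apply Set.eq_empty_iff_forall_notMem.mpr
        rintro a ⟨haσ, haw⟩
        have haσ' : s(a, v) ∈ σ := haσ
        have haw' : G.Adj w a := haw
        have hav : G.Adj a v := G.mem_edgeSet.mp (hσE _ haσ').1
        refine scarf_no_swap h haw' (Finset.mem_insert_self _ _)
          (Sym2.mem_iff.mpr (Or.inr rfl)) ?_
          (Finset.mem_insert_of_mem haσ') (Sym2.mem_iff.mpr (Or.inl rfl)) ?_
        · intro hf
          have : v ∈ s(w, a) := by rw [← hf]; exact Sym2.mem_iff.mpr (Or.inl rfl)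
          rcases Sym2.mem_iff.mp this with h1 | h1
          · exact G.ne_of_adj hvw h1
          · exact G.ne_of_adj hav h1.symm
        · intro hf
          have : w ∈ s(a, v) := by rw [hf]; exact Sym2.mem_iff.mpr (Or.inl rfl)
          rcases Sym2.mem_iff.mp this with h1 | h1
          · exact G.ne_of_adj haw' h1
          · exact G.ne_of_adj hvw h1.symm
  · rintro ⟨H1, hcase⟩
    rcases hcase with hc1 | ⟨⟨e, he, hd0⟩, hab, hAv, hBw⟩
    · exact scarf_case1 G v w hvw σ hσ hc1
    · have hAv' : ∀ x, s(x, w) ∈ σ → ¬ G.Adj v x := by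
        intro x hx hadj
        exact Set.eq_empty_iff_forall_notMem.mp hAv x ⟨hx, hadj⟩
      have hBw' : ∀ x, s(x, v) ∈ σ → ¬ G.Adj w x := by
        intro x hx hadj
        exact Set.eq_empty_iff_forall_notMem.mp hBw x ⟨hx, hadj⟩
      rcases hab with hA0 | hB0
      · have hA0' : ∀ x, s(x, w) ∉ σ := fun x hx =>
          Set.eq_empty_iff_forall_notMem.mp hA0 x hx
        obtain ⟨x, hxe, hxf⟩ := hd0
        have hb : ∃ b, s(b, v) ∈ σ := by
          rcases Sym2.mem_iff.mp hxf with h1 | h1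
          · obtain ⟨u, heq, _⟩ := exists_adj_of_mem (hσE e he).1 (h1 ▸ hxe)
            exact ⟨u, by rwa [Sym2.eq_swap, ← heq]⟩
          · obtain ⟨u, heq, _⟩ := exists_adj_of_mem (hσE e he).1 (h1 ▸ hxe)
            exact absurd (by rwa [Sym2.eq_swap, ← heq] : s(u, w) ∈ σ) (hA0' u)
        obtain ⟨b₀, hb₀⟩ := hb
        have hswap : s(w, v) = s(v, w) := Sym2.eq_swap
        have hres := scarf_case2 G w v hvw.symm σ (by rw [hswap]; exact hσ)
          (by rw [hswap]; exact H1) hA0' hBw' b₀ hb₀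
        rwa [hswap] at hres
      · have hB0' : ∀ x, s(x, v) ∉ σ := fun x hx =>
          Set.eq_empty_iff_forall_notMem.mp hB0 x hx
        obtain ⟨x, hxe, hxf⟩ := hd0
        have ha : ∃ a, s(a, w) ∈ σ := by
          rcases Sym2.mem_iff.mp hxf with h1 | h1
          · obtain ⟨u, heq, _⟩ := exists_adj_of_mem (hσE e he).1 (h1 ▸ hxe)
            exact absurd (by rwa [Sym2.eq_swap, ← heq] : s(u, v) ∈ σ) (hB0' u)
          · obtain ⟨u, heq, _⟩ := exists_adj_of_mem (hσE e he).1 (h1 ▸ hxe)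
            exact ⟨u, by rwa [Sym2.eq_swap, ← heq]⟩
        obtain ⟨a₀, ha₀⟩ := ha
        exact scarf_case2 G v w hvw σ hσ H1 hB0' hAv' a₀ ha₀
end

section
/- (Removing a vertex.) Let G be a finite simple graph, v a vertex of G, and G' = G − v the induced subgraph obtained by deleting v and all edges incident to v. Let τ be a set of edges of G, let σ be the set of edges of τ not containing v, and write the edges of τ containing v as vw_1, …, vw_t with w_1, …, w_t ∈ N_G(v) distinct (t ≥ 0). Then τ is a Scarf face of I(G) if and only if: (1) σ is a Scarf face of I(G'); and (2) either (a) dist_G(σ, vw_i) ≥ 2 for all 1 ≤ i ≤ t and w_i w_j ∉ E(G) for all 1 ≤ i < j ≤ t; or (b) t = 1, dist_G(σ, vw_1) = 0, N_σ(w_1) ∩ N_G(v) = ∅, and dist_G(e, vw_1) ≠ 1 for all e ∈ σ. -/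
/-- The graph `G - v`: delete the vertex `v`, i.e. all edges incident to `v`
(keeping the vertex set). -/
def delVert {V : Type*} (G : SimpleGraph V) (v : V) : SimpleGraph V where
  Adj x y := G.Adj x y ∧ x ≠ v ∧ y ≠ v
  symm := ⟨fun x y h => ⟨h.1.symm, h.2.2, h.2.1⟩⟩
  loopless := ⟨fun x h => G.irrefl h.1⟩

/-!
A set of edges `τ` is a Scarf face of `I(G)` iff it contains every edge of `G` spanned by its
vertex support (otherwise adding that edge keeps the lcm) and every edge of `τ` has a vertex lying
on no other edge of `τ` (otherwise removing it keeps the lcm). Splitting `τ` into the edges `σ`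
avoiding `v` and the star `{vw : w ∈ W}`, both properties of `τ` become properties of `σ` in
`G - v` plus conditions on how the star meets the support of `σ`. Such a star edge `vw` has a
private vertex only if `w` lies outside that support or the star is the single edge `vw`; these
are the cases (a) and (b).
-/

section EdgeSupport

variable {V : Type*}

def edgeSupport (σ : Finset (Sym2 V)) : Set V := {x | ∃ e ∈ σ, x ∈ e}

lemma edgeSupport_mono {σ τ : Finset (Sym2 V)} (h : σ ⊆ τ) : edgeSupport σ ⊆ edgeSupport τ :=
  fun _ ⟨e, he, hx⟩ => ⟨e, h he, hx⟩

open Classical in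
lemma eLcm_apply [DecidableEq V] (σ : Finset (Sym2 V)) (x : V) :
    eLcm σ x = if x ∈ edgeSupport σ then 1 else 0 := by
  rw [eLcm, Finset.sup_apply]
  split_ifs with h
  · obtain ⟨e, he, hx⟩ := h
    refine le_antisymm (Finset.sup_le fun f _ => ?_) ?_
    · unfold edgeMon; split_ifs <;> omega
    · exact Finset.le_sup_of_le he (by simp [edgeMon, hx])
  · refine Nat.eq_zero_of_le_zero (Finset.sup_le fun f hf => ?_)
    simp [edgeMon, show x ∉ f from fun hx => h ⟨f, hf, hx⟩]

lemma eLcm_eq_eLcm_iff [DecidableEq V] {σ τ : Finset (Sym2 V)} :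
    eLcm τ = eLcm σ ↔ edgeSupport τ = edgeSupport σ := by
  simp only [funext_iff, Set.ext_iff, eLcm_apply]
  refine forall_congr' fun x => ?_
  split_ifs <;> simp_all

end EdgeSupport

section Scarf

variable {V : Type*} {G : SimpleGraph V}

def ContainsInducedEdges (G : SimpleGraph V) (σ : Finset (Sym2 V)) : Prop :=
  ∀ ⦃a b⦄, G.Adj a b → a ∈ edgeSupport σ → b ∈ edgeSupport σ → s(a, b) ∈ σ

def HasPrivateVertices (σ : Finset (Sym2 V)) : Prop :=
  ∀ e ∈ σ, ∃ x ∈ e, ∀ f ∈ σ, x ∈ f → f = e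

lemma HasPrivateVertices.mono {σ τ : Finset (Sym2 V)} (h : HasPrivateVertices τ) (hστ : σ ⊆ τ) :
    HasPrivateVertices σ := fun e he =>
  let ⟨x, hx, hp⟩ := h e (hστ he)
  ⟨x, hx, fun f hf => hp f (hστ hf)⟩

theorem isScarf_iff [DecidableEq V] {σ : Finset (Sym2 V)} :
    IsScarf G σ ↔
      (∀ e ∈ σ, e ∈ G.edgeSet) ∧ ContainsInducedEdges G σ ∧ HasPrivateVertices σ := by
  refine ⟨fun ⟨hE, huniq⟩ => ⟨hE, ?_, ?_⟩, fun ⟨hE, hC, hP⟩ => ⟨hE, ?_⟩⟩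
  · intro a b hab ha hb
    have hsupp : edgeSupport (insert s(a, b) σ) = edgeSupport σ := by
      refine (edgeSupport_mono (Finset.subset_insert _ _)).antisymm' ?_
      rintro x ⟨f, hf, hx⟩
      rcases Finset.mem_insert.mp hf with rfl | hf
      · rcases Sym2.mem_iff.mp hx with rfl | rfl <;> assumption
      · exact ⟨f, hf, hx⟩
    have hE' : ∀ e ∈ insert s(a, b) σ, e ∈ G.edgeSet :=
      (Finset.forall_mem_insert _ _ _).mpr ⟨hab, hE⟩
    exact Finset.insert_eq_self.mp (huniq _ hE' (eLcm_eq_eLcm_iff.mpr hsupp))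
  · intro e he
    by_contra! hshared
    have hsupp : edgeSupport (σ.erase e) = edgeSupport σ := by
      refine (edgeSupport_mono (Finset.erase_subset _ _)).antisymm ?_
      rintro x ⟨f, hf, hx⟩
      by_cases hfe : f = e
      · subst hfe
        obtain ⟨g, hg, hxg, hgf⟩ := hshared x hx
        exact ⟨g, Finset.mem_erase.mpr ⟨hgf, hg⟩, hxg⟩
      · exact ⟨f, Finset.mem_erase.mpr ⟨hfe, hf⟩, hx⟩
    have := huniq _ (fun f hf => hE f (Finset.mem_of_mem_erase hf)) (eLcm_eq_eLcm_iff.mpr hsupp)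
    exact Finset.notMem_erase e σ (by rw [this]; exact he)
  · intro τ hτE hlcm
    have hsupp := eLcm_eq_eLcm_iff.mp hlcm
    have hτσ : τ ⊆ σ := by
      intro f hf
      induction f using Sym2.ind with
      | _ a b =>
        exact hC (hτE _ hf) (hsupp ▸ ⟨_, hf, Sym2.mem_mk_left a b⟩)
          (hsupp ▸ ⟨_, hf, Sym2.mem_mk_right a b⟩)
    refine hτσ.antisymm fun e he => ?_
    obtain ⟨x, hx, hp⟩ := hP e he
    obtain ⟨f, hf, hxf⟩ : x ∈ edgeSupport τ := hsupp ▸ ⟨e, he, hx⟩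
    exact hp f (hτσ hf) hxf ▸ hf

lemma ContainsInducedEdges.of_subset {σ τ : Finset (Sym2 V)} (hσ : ContainsInducedEdges G σ)
    (hστ : σ ⊆ τ)
    (h : ∀ ⦃a b⦄, G.Adj a b → a ∈ edgeSupport τ → b ∈ edgeSupport τ → a ∉ edgeSupport σ →
      s(a, b) ∈ τ) :
    ContainsInducedEdges G τ := by
  intro a b hab ha hb
  by_cases haσ : a ∈ edgeSupport σ
  · by_cases hbσ : b ∈ edgeSupport σ
    · exact hστ (hσ hab haσ hbσ)
    · exact Sym2.eq_swap ▸ h hab.symm hb ha hbσ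
  · exact h hab ha hb haσ

lemma dist0_mk_iff {e : Sym2 V} {a b : V} : Dist0 e s(a, b) ↔ a ∈ e ∨ b ∈ e := by
  simp [Dist0, and_or_left, exists_or]

lemma not_adj_of_not_dist1 {e : Sym2 V} {a b x : V} (h1 : ¬ Dist1 G e s(a, b))
    (h0 : ¬ Dist0 e s(a, b)) (hx : x ∈ e) : ¬ G.Adj x a ∧ ¬ G.Adj x b :=
  ⟨fun h => h1 ⟨h0, x, hx, a, Sym2.mem_mk_left a b, h⟩,
    fun h => h1 ⟨h0, x, hx, b, Sym2.mem_mk_right a b, h⟩⟩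

end Scarf

section DeleteVertex

variable {V : Type*} {G : SimpleGraph V} {v : V}

lemma mem_edgeSet_delVert {e : Sym2 V} :
    e ∈ (delVert G v).edgeSet ↔ e ∈ G.edgeSet ∧ v ∉ e := by
  induction e using Sym2.ind with
  | _ a b => simp [delVert, eq_comm]

lemma ContainsInducedEdges.of_delVert {σ : Finset (Sym2 V)}
    (hσ : ContainsInducedEdges (delVert G v) σ) (hv : v ∉ edgeSupport σ) :
    ContainsInducedEdges G σ := fun _ _ hab ha hb =>
  hσ ⟨hab, fun h => hv (h ▸ ha), fun h => hv (h ▸ hb)⟩ ha hb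

lemma notMem_edgeSupport_of_subset_edgeSet_delVert {σ : Finset (Sym2 V)}
    (h : ∀ e ∈ σ, e ∈ (delVert G v).edgeSet) : v ∉ edgeSupport σ :=
  fun ⟨e, he, hve⟩ => (mem_edgeSet_delVert.mp (h e he)).2 hve

theorem IsScarf.filter_delVert [DecidableEq V] {τ : Finset (Sym2 V)} (h : IsScarf G τ) :
    IsScarf (delVert G v) (τ.filter (v ∉ ·)) := by
  obtain ⟨hE, hC, hP⟩ := isScarf_iff.mp h
  have hsub := edgeSupport_mono (Finset.filter_subset (v ∉ ·) τ)
  refine isScarf_iff.mpr ⟨fun e he => ?_, fun a b hab ha hb => ?_,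
    hP.mono (Finset.filter_subset _ _)⟩
  · rw [Finset.mem_filter] at he
    exact mem_edgeSet_delVert.mpr ⟨hE e he.1, he.2⟩
  · exact Finset.mem_filter.mpr ⟨hC hab.1 (hsub ha) (hsub hb), (mem_edgeSet_delVert.mp hab).2⟩

end DeleteVertex

section Star

variable {V : Type*} [DecidableEq V] {v w : V} {σ : Finset (Sym2 V)}
  {W : Finset V}

def starEdges (v : V) (W : Finset V) : Finset (Sym2 V) := W.image (s(v, ·))

lemma mem_union_starEdges {f : Sym2 V} :
    f ∈ σ ∪ starEdges v W ↔ f ∈ σ ∨ ∃ w ∈ W, s(v, w) = f := by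
  simp [starEdges]

lemma mk_mem_union_starEdges (hw : w ∈ W) : s(v, w) ∈ σ ∪ starEdges v W :=
  mem_union_starEdges.mpr (Or.inr ⟨w, hw, rfl⟩)

lemma mem_edgeSupport_union_starEdges {x : V} :
    x ∈ edgeSupport (σ ∪ starEdges v W) ↔
      x ∈ edgeSupport σ ∨ x ∈ W ∨ (x = v ∧ W.Nonempty) := by
  constructor
  · rintro ⟨f, hf, hx⟩
    rcases mem_union_starEdges.mp hf with hf | ⟨w, hw, rfl⟩
    · exact Or.inl ⟨f, hf, hx⟩
    · rcases Sym2.mem_iff.mp hx with rfl | rfl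
      exacts [Or.inr (Or.inr ⟨rfl, w, hw⟩), Or.inr (Or.inl hw)]
  · rintro (hx | hx | ⟨rfl, w, hw⟩)
    · exact edgeSupport_mono Finset.subset_union_left hx
    · exact ⟨_, mk_mem_union_starEdges hx, Sym2.mem_mk_right _ _⟩
    · exact ⟨_, mk_mem_union_starEdges hw, Sym2.mem_mk_left _ _⟩

lemma mem_of_mem_union_starEdges_of_notMem {f : Sym2 V} (hf : f ∈ σ ∪ starEdges v W)
    (hvf : v ∉ f) : f ∈ σ := by
  rcases mem_union_starEdges.mp hf with hf | ⟨w, -, rfl⟩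
  exacts [hf, absurd (Sym2.mem_mk_left v w) hvf]

lemma mem_of_mem_union_starEdges_of_mem {f : Sym2 V} {x : V} (hf : f ∈ σ ∪ starEdges v W)
    (hxf : x ∈ f) (hxv : x ≠ v) (hxW : x ∉ W) : f ∈ σ := by
  rcases mem_union_starEdges.mp hf with hf | ⟨w, hw, rfl⟩
  · exact hf
  · rcases Sym2.mem_iff.mp hxf with rfl | rfl
    exacts [absurd rfl hxv, absurd hw hxW]

lemma mem_of_mk_mem_union_starEdges (hv : v ∉ edgeSupport σ) {x : V}
    (h : s(v, x) ∈ σ ∪ starEdges v W) : x ∈ W := by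
  rcases mem_union_starEdges.mp h with h | ⟨w, hw, hwx⟩
  · exact absurd ⟨_, h, Sym2.mem_mk_left v x⟩ hv
  · exact Sym2.congr_right.mp hwx ▸ hw

lemma filter_union_starEdges (hv : v ∉ edgeSupport σ) :
    (σ ∪ starEdges v W).filter (v ∉ ·) = σ := by
  ext f
  rw [Finset.mem_filter]
  exact ⟨fun ⟨hf, hvf⟩ => mem_of_mem_union_starEdges_of_notMem hf hvf,
    fun hf => ⟨Finset.subset_union_left hf, fun hvf => hv ⟨f, hf, hvf⟩⟩⟩

lemma eq_singleton_of_mem_edgeSupport (hP : HasPrivateVertices (σ ∪ starEdges v W))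
    (hv : v ∉ edgeSupport σ) (hw : w ∈ W) (hwσ : w ∈ edgeSupport σ) : W = {w} := by
  obtain ⟨x, hx, hp⟩ := hP _ (mk_mem_union_starEdges hw)
  rcases Sym2.mem_iff.mp hx with rfl | rfl
  · refine Finset.eq_singleton_iff_unique_mem.mpr ⟨hw, fun w' hw' => ?_⟩
    exact Sym2.congr_right.mp (hp _ (mk_mem_union_starEdges hw') (Sym2.mem_mk_left _ _))
  · obtain ⟨e, he, hxe⟩ := hwσ
    have := hp e (Finset.subset_union_left he) hxe
    exact absurd ⟨e, he, this ▸ Sym2.mem_mk_left _ _⟩ hv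

end Star

section Conditions

variable {V : Type*} [DecidableEq V] {G : SimpleGraph V} {v w : V} {σ : Finset (Sym2 V)}
  {W : Finset V}

theorem far_of_isScarf_union_starEdges (hτ : IsScarf G (σ ∪ starEdges v W)) (hv : v ∉ edgeSupport σ)
    (hWσ : ∀ w ∈ W, w ∉ edgeSupport σ) :
    (∀ w ∈ W, ∀ e ∈ σ, ¬ Dist0 e s(v, w) ∧ ¬ Dist1 G e s(v, w)) ∧
      (∀ w ∈ W, ∀ w' ∈ W, w ≠ w' → ¬ G.Adj w w') := by
  obtain ⟨hE, hC, -⟩ := isScarf_iff.mp hτ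
  have hWv : ∀ w ∈ W, w ≠ v := fun w hw => (hE _ (mk_mem_union_starEdges hw)).ne.symm
  have hvτ : ∀ w ∈ W, v ∈ edgeSupport (σ ∪ starEdges v W) := fun w hw =>
    mem_edgeSupport_union_starEdges.mpr (Or.inr (Or.inr ⟨rfl, w, hw⟩))
  have hWτ : ∀ w ∈ W, w ∈ edgeSupport (σ ∪ starEdges v W) := fun w hw =>
    mem_edgeSupport_union_starEdges.mpr (Or.inr (Or.inl hw))
  have hστ : edgeSupport σ ⊆ edgeSupport (σ ∪ starEdges v W) :=
    edgeSupport_mono Finset.subset_union_left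
  have hnear : ∀ w ∈ W, ∀ e ∈ σ, ¬ Dist0 e s(v, w) := fun w hw e he h =>
    (dist0_mk_iff.mp h).elim (fun hve => hv ⟨e, he, hve⟩) (fun hwe => hWσ w hw ⟨e, he, hwe⟩)
  refine ⟨fun w hw e he => ⟨hnear w hw e he, ?_⟩, fun w hw w' hw' _ hadj => ?_⟩
  · rintro ⟨-, x, hxe, y, hy, hxy⟩
    have hxσ : x ∈ edgeSupport σ := ⟨e, he, hxe⟩
    have hxv : x ≠ v := fun h => hv (h ▸ hxσ)
    rcases Sym2.mem_iff.mp hy with rfl | rfl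
    · have := hC hxy.symm (hvτ w hw) (hστ hxσ)
      exact hWσ x (mem_of_mk_mem_union_starEdges hv this) hxσ
    · have := hC hxy (hστ hxσ) (hWτ y hw)
      have hvxy : v ∉ s(x, y) := by simp [hxv.symm, (hWv y hw).symm]
      exact hWσ y hw ⟨_, mem_of_mem_union_starEdges_of_notMem this hvxy, Sym2.mem_mk_right x y⟩
  · have := hC hadj (hWτ w hw) (hWτ w' hw')
    have hvww' : v ∉ s(w, w') := by simp [(hWv w hw).symm, (hWv w' hw').symm]
    exact hWσ w hw ⟨_, mem_of_mem_union_starEdges_of_notMem this hvww', Sym2.mem_mk_left w w'⟩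

theorem isolated_of_isScarf_union_starEdges_singleton (hτ : IsScarf G (σ ∪ starEdges v {w}))
    (hv : v ∉ edgeSupport σ) (hwσ : w ∈ edgeSupport σ) :
    {x : V | s(x, w) ∈ σ} ∩ G.neighborSet v = ∅ ∧ ∀ e ∈ σ, ¬ Dist1 G e s(v, w) := by
  obtain ⟨hE, hC, hP⟩ := isScarf_iff.mp hτ
  have hστ : σ ⊆ σ ∪ starEdges v {w} := Finset.subset_union_left
  have hvw : s(v, w) ∈ σ ∪ starEdges v {w} := mk_mem_union_starEdges (Finset.mem_singleton_self w)
  have hnbr : ∀ x ∈ edgeSupport σ, G.Adj v x → x = w := fun x hx hvx =>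
    Finset.mem_singleton.mp <| mem_of_mk_mem_union_starEdges hv <|
      hC hvx ⟨_, hvw, Sym2.mem_mk_left v w⟩ (edgeSupport_mono hστ hx)
  refine ⟨Set.eq_empty_iff_forall_notMem.mpr fun x ⟨hxw, hvx⟩ => ?_, ?_⟩
  · have hxw' : s(x, w) ∈ G.edgeSet := hE _ (hστ hxw)
    exact (hnbr x ⟨_, hxw, Sym2.mem_mk_left x w⟩ hvx ▸ hxw').ne rfl
  · rintro e he ⟨hfar, x, hxe, y, hy, hxy⟩
    have hwe : w ∉ e := fun h => hfar (dist0_mk_iff.mpr (Or.inr h))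
    have hxσ : x ∈ edgeSupport σ := ⟨e, he, hxe⟩
    rcases Sym2.mem_iff.mp hy with rfl | rfl
    · exact hwe (hnbr x hxσ hxy.symm ▸ hxe)
    -- the edge `xy` would have no private vertex: `x` lies on `e`, `y` on `vy`
    obtain ⟨z, hz, hp⟩ := hP _ (hC hxy (edgeSupport_mono hστ hxσ) (edgeSupport_mono hστ hwσ))
    rcases Sym2.mem_iff.mp hz with hzx | hzy
    · exact hwe (hp e (hστ he) (hzx ▸ hxe) ▸ Sym2.mem_mk_right x y)
    · have hvx : v = x := Sym2.congr_left.mp (hp _ hvw (hzy ▸ Sym2.mem_mk_right v y))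
      exact hv (hvx ▸ hxσ)

end Conditions

section Converse

variable {V : Type*} [DecidableEq V] {G : SimpleGraph V} {v w : V} {σ : Finset (Sym2 V)}
  {W : Finset V}

lemma union_starEdges_subset_edgeSet (hσ : ∀ e ∈ σ, e ∈ (delVert G v).edgeSet)
    (hW : ∀ w ∈ W, G.Adj v w) : ∀ e ∈ σ ∪ starEdges v W, e ∈ G.edgeSet := fun e he => by
  rcases mem_union_starEdges.mp he with he | ⟨w, hw, rfl⟩
  exacts [(mem_edgeSet_delVert.mp (hσ e he)).1, hW w hw]

theorem isScarf_union_starEdges_of_far (hσ : IsScarf (delVert G v) σ) (hW : ∀ w ∈ W, G.Adj v w)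
    (hfar : ∀ w ∈ W, ∀ e ∈ σ, ¬ Dist0 e s(v, w) ∧ ¬ Dist1 G e s(v, w))
    (hind : ∀ w ∈ W, ∀ w' ∈ W, w ≠ w' → ¬ G.Adj w w') :
    IsScarf G (σ ∪ starEdges v W) := by
  obtain ⟨hE, hC, hP⟩ := isScarf_iff.mp hσ
  have hv := notMem_edgeSupport_of_subset_edgeSet_delVert hE
  have hWσ : ∀ w ∈ W, w ∉ edgeSupport σ := fun w hw ⟨e, he, hwe⟩ =>
    (hfar w hw e he).1 (dist0_mk_iff.mpr (Or.inr hwe))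
  have hnadj : ∀ w ∈ W, ∀ x ∈ edgeSupport σ, ¬ G.Adj x v ∧ ¬ G.Adj x w := by
    rintro w hw x ⟨e, he, hxe⟩
    exact not_adj_of_not_dist1 (hfar w hw e he).2 (hfar w hw e he).1 hxe
  refine isScarf_iff.mpr ⟨union_starEdges_subset_edgeSet hE hW, ?_, fun f hf => ?_⟩
  · refine (hC.of_delVert hv).of_subset Finset.subset_union_left fun a b hab ha hb haσ => ?_
    rcases mem_edgeSupport_union_starEdges.mp ha with haσ' | haW | ⟨rfl, w, hw⟩
    · exact absurd haσ' haσ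
    · rcases mem_edgeSupport_union_starEdges.mp hb with hbσ | hbW | ⟨rfl, -⟩
      · exact absurd hab.symm (hnadj a haW b hbσ).2
      · exact absurd hab (hind a haW b hbW hab.ne)
      · exact Sym2.eq_swap ▸ mk_mem_union_starEdges haW
    · rcases mem_edgeSupport_union_starEdges.mp hb with hbσ | hbW | ⟨hbv, -⟩
      · exact absurd hab.symm (hnadj w hw b hbσ).1
      · exact mk_mem_union_starEdges hbW
      · exact absurd (hbv ▸ hab) (G.irrefl)
  · rcases mem_union_starEdges.mp hf with hfσ | ⟨w, hw, rfl⟩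
    · obtain ⟨x, hx, hp⟩ := hP f hfσ
      have hxσ : x ∈ edgeSupport σ := ⟨f, hfσ, hx⟩
      refine ⟨x, hx, fun g hg hxg => hp g ?_ hxg⟩
      exact mem_of_mem_union_starEdges_of_mem hg hxg (fun h => hv (h ▸ hxσ))
        (fun hxW => hWσ x hxW hxσ)
    · refine ⟨w, Sym2.mem_mk_right v w, fun g hg hwg => ?_⟩
      rcases mem_union_starEdges.mp hg with hgσ | ⟨w', hw', rfl⟩
      · exact absurd ⟨g, hgσ, hwg⟩ (hWσ w hw)
      · rcases Sym2.mem_iff.mp hwg with h | h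
        exacts [absurd h (hW w hw).ne', h ▸ rfl]

theorem isScarf_union_starEdges_singleton (hσ : IsScarf (delVert G v) σ) (hvw : G.Adj v w)
    (hwσ : w ∈ edgeSupport σ) (hN : {x : V | s(x, w) ∈ σ} ∩ G.neighborSet v = ∅)
    (hfar : ∀ e ∈ σ, ¬ Dist1 G e s(v, w)) :
    IsScarf G (σ ∪ starEdges v {w}) := by
  obtain ⟨hE, hC, hP⟩ := isScarf_iff.mp hσ
  have hv := notMem_edgeSupport_of_subset_edgeSet_delVert hE
  have hfar' : ∀ e ∈ σ, w ∉ e → ∀ x ∈ e, ¬ G.Adj x v ∧ ¬ G.Adj x w := by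
    intro e he hwe x hxe
    have hd0 : ¬ Dist0 e s(v, w) := fun h =>
      (dist0_mk_iff.mp h).elim (fun hve => hv ⟨e, he, hve⟩) hwe
    exact not_adj_of_not_dist1 (hfar e he) hd0 hxe
  have hnbr : ∀ x ∈ edgeSupport σ, G.Adj x v → x = w := by
    rintro x ⟨e, he, hxe⟩ hxv
    by_contra hxw
    by_cases hwe : w ∈ e
    · have hexw : e = s(x, w) := (Sym2.mem_and_mem_iff hxw).mp ⟨hxe, hwe⟩
      exact (Set.eq_empty_iff_forall_notMem.mp hN) x ⟨show s(x, w) ∈ σ from hexw ▸ he, hxv.symm⟩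
    · exact (hfar' e he hwe x hxe).1 hxv
  have hvwτ : s(v, w) ∈ σ ∪ starEdges v {w} := mk_mem_union_starEdges (Finset.mem_singleton_self w)
  refine isScarf_iff.mpr ⟨union_starEdges_subset_edgeSet hE (by simpa using hvw), ?_,
    fun f hf => ?_⟩
  · refine (hC.of_delVert hv).of_subset Finset.subset_union_left fun a b hab ha hb haσ => ?_
    obtain rfl : a = v := by
      rcases mem_edgeSupport_union_starEdges.mp ha with h | h | h
      exacts [absurd h haσ, absurd (Finset.mem_singleton.mp h ▸ hwσ) haσ, h.1]
    rcases mem_edgeSupport_union_starEdges.mp hb with hbσ | hbw | ⟨hbv, -⟩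
    · exact hnbr b hbσ hab.symm ▸ hvwτ
    · exact mk_mem_union_starEdges hbw
    · exact absurd (hbv ▸ hab) (G.irrefl)
  rcases mem_union_starEdges.mp hf with hfσ | ⟨w', hw', rfl⟩
  · by_cases hwf : w ∈ f
    · -- `u` is private in `f = wu`: another edge at `u` avoids `w`, so `u ∼ w` would violate (b)
      obtain ⟨u, rfl⟩ := Sym2.mem_iff_exists.mp hwf
      have hwu : (delVert G v).Adj w u := hE _ hfσ
      refine ⟨u, Sym2.mem_mk_right w u, fun g hg hug => ?_⟩
      have hgσ := mem_of_mem_union_starEdges_of_mem hg hug hwu.2.2 (by simpa using hwu.1.ne')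
      by_cases hwg : w ∈ g
      · exact (Sym2.mem_and_mem_iff hwu.1.ne).mp ⟨hwg, hug⟩
      · exact absurd hwu.1.symm (hfar' g hgσ hwg u hug).2
    · obtain ⟨x, hx, hp⟩ := hP f hfσ
      have hxσ : x ∈ edgeSupport σ := ⟨f, hfσ, hx⟩
      refine ⟨x, hx, fun g hg hxg => hp g ?_ hxg⟩
      exact mem_of_mem_union_starEdges_of_mem hg hxg (fun h => hv (h ▸ hxσ))
        (by rintro hxw; rw [Finset.mem_singleton.mp hxw] at hx; exact hwf hx)
  · refine ⟨v, Sym2.mem_mk_left v w', fun g hg hvg => ?_⟩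
    rcases mem_union_starEdges.mp hg with hgσ | ⟨w'', hw'', rfl⟩
    · exact absurd ⟨g, hgσ, hvg⟩ hv
    · rw [Finset.mem_singleton.mp hw', Finset.mem_singleton.mp hw'']

end Converse

theorem stmt10_general {V : Type*} [DecidableEq V] (G : SimpleGraph V) (v : V)
    (σ : Finset (Sym2 V)) (hσE : ∀ e ∈ σ, e ∈ (delVert G v).edgeSet)
    (W : Finset V) (hW : ∀ w ∈ W, G.Adj v w) :
    IsScarf G (σ ∪ W.image (fun w => s(v, w))) ↔
      (IsScarf (delVert G v) σ ∧
        (((∀ w ∈ W, ∀ e ∈ σ, ¬ Dist0 e s(v, w) ∧ ¬ Dist1 G e s(v, w)) ∧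
            (∀ w ∈ W, ∀ w' ∈ W, w ≠ w' → ¬ G.Adj w w')) ∨
          (∃ w, W = {w} ∧ (∃ e ∈ σ, Dist0 e s(v, w)) ∧
            {x : V | s(x, w) ∈ σ} ∩ G.neighborSet v = ∅ ∧
            ∀ e ∈ σ, ¬ Dist1 G e s(v, w)))) := by
  have hv := notMem_edgeSupport_of_subset_edgeSet_delVert hσE
  change IsScarf G (σ ∪ starEdges v W) ↔ _
  constructor
  · intro hτ
    refine ⟨filter_union_starEdges hv ▸ hτ.filter_delVert, ?_⟩
    by_cases hWσ : ∀ w ∈ W, w ∉ edgeSupport σ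
    · exact Or.inl (far_of_isScarf_union_starEdges hτ hv hWσ)
    push Not at hWσ
    obtain ⟨w, hw, hwσ⟩ := hWσ
    obtain rfl := eq_singleton_of_mem_edgeSupport (isScarf_iff.mp hτ).2.2 hv hw hwσ
    obtain ⟨e, he, hwe⟩ := hwσ
    exact Or.inr ⟨w, rfl, ⟨e, he, dist0_mk_iff.mpr (Or.inr hwe)⟩,
      isolated_of_isScarf_union_starEdges_singleton hτ hv ⟨e, he, hwe⟩⟩
  · rintro ⟨hσ, ⟨hfar, hind⟩ | ⟨w, rfl, ⟨e, he, hd0⟩, hN, hfar⟩⟩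
    · exact isScarf_union_starEdges_of_far hσ hW hfar hind
    have hwe : w ∈ e := (dist0_mk_iff.mp hd0).resolve_left fun hve => hv ⟨e, he, hve⟩
    exact isScarf_union_starEdges_singleton hσ (hW w (Finset.mem_singleton_self w)) ⟨e, he, hwe⟩
      hN hfar

theorem stmt10 {V : Type*} [Fintype V] [DecidableEq V] (G : SimpleGraph V) (v : V)
    (σ : Finset (Sym2 V)) (hσE : ∀ e ∈ σ, e ∈ (delVert G v).edgeSet)
    (W : Finset V) (hW : ∀ w ∈ W, G.Adj v w) :
    IsScarf G (σ ∪ W.image (fun w => s(v, w))) ↔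
      (IsScarf (delVert G v) σ ∧
        (((∀ w ∈ W, ∀ e ∈ σ, ¬ Dist0 e s(v, w) ∧ ¬ Dist1 G e s(v, w)) ∧
            (∀ w ∈ W, ∀ w' ∈ W, w ≠ w' → ¬ G.Adj w w')) ∨
          (∃ w, W = {w} ∧ (∃ e ∈ σ, Dist0 e s(v, w)) ∧
            {x : V | s(x, w) ∈ σ} ∩ G.neighborSet v = ∅ ∧
            ∀ e ∈ σ, ¬ Dist1 G e s(v, w)))) :=
  stmt10_general G v σ hσE W hW
end
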